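/- For μ₁, μ₂ ∈ ℝ and σ₁, σ₂ > 0, let p_{μᵢ,σᵢ} be the normal densities with means μᵢ and standard deviations σᵢ. Then Onicescu's correlation coefficient satisfies ρ(p_{μ₁,σ₁}, p_{μ₂,σ₂}) = √(2σ₁σ₂/(σ₁²+σ₂²)) · exp(-(μ₁-μ₂)²/(2σ₁²+2σ₂²)), and the Cauchy–Schwarz divergence satisfies D_CS(p_{μ₁,σ₁}, p_{μ₂,σ₂}) = (μ₁-μ₂)²/(2σ₁²+2σ₂²) + (1/2)·log((1/2)·(σ₁/σ₂ + σ₂/σ₁)). -/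

import Mathlib

open MeasureTheory Real

/-- Density of the normal distribution with mean `μ` and standard deviation `σ`. -/
noncomputable def normalDensity (m s : ℝ) (x : ℝ) : ℝ :=
  (1 / (s * Real.sqrt (2 * Real.pi))) * Real.exp (-(x - m) ^ 2 / (2 * s ^ 2))

/-!
Completing the square, the product of the normal densities with parameters `(m₁, s₁)` and
`(m₂, s₂)` is `exp (-(m₁ - m₂)² / (2 s₁² + 2 s₂²))` times an unnormalised Gaussian in `x`, so
all three integrals in `ρ` reduce to `∫ exp (-a x²) = √(π / a)`. The self-products give
`∫ p² = 1 / (2 s √π)`, and the prefactors combine to `√(2 s₁ s₂ / (s₁² + s₂²))`.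
-/

theorem integral_exp_neg_mul_sub_sq (a c : ℝ) :
    ∫ x : ℝ, exp (-a * (x - c) ^ 2) = √(π / a) := by
  rw [← integral_gaussian a]
  exact integral_sub_right_eq_self (fun x => exp (-a * x ^ 2)) c

theorem normalDensity_mul_normalDensity {s₁ s₂ : ℝ} (hs₁ : s₁ ≠ 0) (hs₂ : s₂ ≠ 0)
    (m₁ m₂ x : ℝ) :
    normalDensity m₁ s₁ x * normalDensity m₂ s₂ x =
      (2 * π * s₁ * s₂)⁻¹ * exp (-(m₁ - m₂) ^ 2 / (2 * s₁ ^ 2 + 2 * s₂ ^ 2)) *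
        exp (-((s₁ ^ 2 + s₂ ^ 2) / (2 * s₁ ^ 2 * s₂ ^ 2)) *
          (x - (m₁ * s₂ ^ 2 + m₂ * s₁ ^ 2) / (s₁ ^ 2 + s₂ ^ 2)) ^ 2) := by
  have hT : s₁ ^ 2 + s₂ ^ 2 ≠ 0 := by positivity
  have hexponent : -(x - m₁) ^ 2 / (2 * s₁ ^ 2) + -(x - m₂) ^ 2 / (2 * s₂ ^ 2) =
      -(m₁ - m₂) ^ 2 / (2 * s₁ ^ 2 + 2 * s₂ ^ 2) +
        -((s₁ ^ 2 + s₂ ^ 2) / (2 * s₁ ^ 2 * s₂ ^ 2)) *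
          (x - (m₁ * s₂ ^ 2 + m₂ * s₁ ^ 2) / (s₁ ^ 2 + s₂ ^ 2)) ^ 2 := by
    field_simp
    ring
  have hsqrt : √(2 * π) * √(2 * π) = 2 * π := mul_self_sqrt (by positivity)
  unfold normalDensity
  rw [mul_mul_mul_comm, ← exp_add, hexponent, exp_add, ← mul_assoc, one_div_mul_one_div,
    mul_mul_mul_comm, hsqrt]
  ring

theorem integral_normalDensity_mul (m₁ m₂ : ℝ) {s₁ s₂ : ℝ} (hs₁ : 0 < s₁) (hs₂ : 0 < s₂) :
    ∫ x : ℝ, normalDensity m₁ s₁ x * normalDensity m₂ s₂ x =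
      (√(2 * π * (s₁ ^ 2 + s₂ ^ 2)))⁻¹ * exp (-(m₁ - m₂) ^ 2 / (2 * s₁ ^ 2 + 2 * s₂ ^ 2)) := by
  simp_rw [normalDensity_mul_normalDensity hs₁.ne' hs₂.ne']
  rw [integral_const_mul, integral_exp_neg_mul_sub_sq, mul_right_comm]
  congr 1
  have hπ : π / ((s₁ ^ 2 + s₂ ^ 2) / (2 * s₁ ^ 2 * s₂ ^ 2)) =
      (2 * π * s₁ * s₂) ^ 2 / (2 * π * (s₁ ^ 2 + s₂ ^ 2)) := by
    field_simp
  rw [hπ, sqrt_div' _ (by positivity), sqrt_sq (by positivity)]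
  field_simp

theorem integral_normalDensity_sq (m : ℝ) {s : ℝ} (hs : 0 < s) :
    ∫ x : ℝ, normalDensity m s x ^ 2 = (2 * s * √π)⁻¹ := by
  have h : 2 * π * (s ^ 2 + s ^ 2) = (2 * s * √π) ^ 2 := by
    rw [mul_pow, mul_pow, sq_sqrt pi_pos.le]
    ring
  simp_rw [sq (normalDensity m s _), integral_normalDensity_mul m m hs hs, sub_self, h,
    sqrt_sq (by positivity : 0 ≤ 2 * s * √π)]
  simp

theorem neg_log_sqrt_mul_exp {u : ℝ} (hu : 0 < u) (t : ℝ) :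
    -log (√u * exp t) = -t + 1 / 2 * log u⁻¹ := by
  rw [log_mul (sqrt_pos.2 hu).ne' (exp_ne_zero t), log_exp, log_sqrt hu.le, log_inv]
  ring

/-- Onicescu's correlation coefficient and the Cauchy–Schwarz divergence between two
univariate normal densities. -/
theorem onicescu_correlation_cauchySchwarz_normal (m₁ m₂ : ℝ) (s₁ s₂ : ℝ)
    (hs₁ : 0 < s₁) (hs₂ : 0 < s₂) :
    ((∫ x : ℝ, normalDensity m₁ s₁ x * normalDensity m₂ s₂ x) /
        Real.sqrt ((∫ x : ℝ, (normalDensity m₁ s₁ x) ^ 2) *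
          (∫ x : ℝ, (normalDensity m₂ s₂ x) ^ 2))
      = Real.sqrt (2 * s₁ * s₂ / (s₁ ^ 2 + s₂ ^ 2)) *
          Real.exp (-(m₁ - m₂) ^ 2 / (2 * s₁ ^ 2 + 2 * s₂ ^ 2))) ∧
    -Real.log ((∫ x : ℝ, normalDensity m₁ s₁ x * normalDensity m₂ s₂ x) /
        Real.sqrt ((∫ x : ℝ, (normalDensity m₁ s₁ x) ^ 2) *
          (∫ x : ℝ, (normalDensity m₂ s₂ x) ^ 2)))
      = (m₁ - m₂) ^ 2 / (2 * s₁ ^ 2 + 2 * s₂ ^ 2) +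
          (1 / 2) * Real.log ((1 / 2) * (s₁ / s₂ + s₂ / s₁)) := by
  have hnormalization : (√(2 * π * (s₁ ^ 2 + s₂ ^ 2)))⁻¹ / √((2 * s₁ * √π)⁻¹ * (2 * s₂ * √π)⁻¹) =
      √(2 * s₁ * s₂ / (s₁ ^ 2 + s₂ ^ 2)) := by
    rw [← sqrt_inv, ← sqrt_div (by positivity)]
    congr 1
    field_simp
    rw [sq_sqrt pi_pos.le]
  have hcorrelation : (∫ x : ℝ, normalDensity m₁ s₁ x * normalDensity m₂ s₂ x) /
        √((∫ x : ℝ, normalDensity m₁ s₁ x ^ 2) * ∫ x : ℝ, normalDensity m₂ s₂ x ^ 2) =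
      √(2 * s₁ * s₂ / (s₁ ^ 2 + s₂ ^ 2)) * exp (-(m₁ - m₂) ^ 2 / (2 * s₁ ^ 2 + 2 * s₂ ^ 2)) := by
    rw [integral_normalDensity_mul m₁ m₂ hs₁ hs₂, integral_normalDensity_sq m₁ hs₁,
      integral_normalDensity_sq m₂ hs₂, mul_div_right_comm, hnormalization]
  refine ⟨hcorrelation, ?_⟩
  have hinv : (2 * s₁ * s₂ / (s₁ ^ 2 + s₂ ^ 2))⁻¹ = 1 / 2 * (s₁ / s₂ + s₂ / s₁) := by
    field_simp
  rw [hcorrelation, neg_log_sqrt_mul_exp (by positivity), hinv, neg_div, neg_neg]
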